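/- The null space {v ∈ ℂ^N ⊗ ℂ^N : Λv = 0} of Λ has complex dimension equal to the central binomial coefficient C(2m, m). -/

import Mathlib

open Matrix Kronecker Finset
open scoped ComplexOrder

noncomputable section

/-- A Majorana family: `2*m` Hermitian `2^m × 2^m` complex matrices squaring to the
identity and pairwise anticommuting. -/
structure MajoranaFamily (m : ℕ) where
  c : Fin (2*m) → Matrix (Fin (2^m)) (Fin (2^m)) ℂ
  herm : ∀ j, (c j).IsHermitian
  sq : ∀ j, c j * c j = 1
  anticomm : ∀ j k, j ≠ k → c j * c k = -(c k * c j)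

abbrev Mat (m : ℕ) := Matrix (Fin (2^m)) (Fin (2^m)) ℂ
abbrev Mat2 (m : ℕ) := Matrix (Fin (2^m) × Fin (2^m)) (Fin (2^m) × Fin (2^m)) ℂ
abbrev MatN (m n : ℕ) := Matrix (Fin n → Fin (2^m)) (Fin n → Fin (2^m)) ℂ

variable {m : ℕ}

/-- A state: a positive semidefinite matrix of trace `1`. -/
def IsState {ι : Type*} [Fintype ι] (ρ : Matrix ι ι ℂ) : Prop :=
  ρ.PosSemidef ∧ ρ.trace = 1

/-- The positive semidefinite square root of a positive semidefinite matrix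
(the former Mathlib `Matrix.PosSemidef.sqrt`, spelled out). -/
def posSemidefSqrt {n 𝕜 : Type*} [Fintype n] [DecidableEq n] [RCLike 𝕜] {A : Matrix n n 𝕜}
    (hA : A.PosSemidef) : Matrix n n 𝕜 :=
  hA.1.eigenvectorUnitary.1 * diagonal ((↑) ∘ (√·) ∘ hA.1.eigenvalues) *
    (star hA.1.eigenvectorUnitary : Matrix n n 𝕜)

/-- The trace norm `‖X‖₁ = Tr √(XᴴX)`. -/
def traceNorm {ι : Type*} [Fintype ι] [DecidableEq ι] (X : Matrix ι ι ℂ) : ℝ :=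
  ((posSemidefSqrt (Matrix.posSemidef_conjTranspose_mul_self X)).trace).re

/-- The rotated Majorana operators `c̃_j = Σ_i R_{ij} c_i`. -/
def tilde (F : MajoranaFamily m) (R : Matrix (Fin (2*m)) (Fin (2*m)) ℝ)
    (j : Fin (2*m)) : Mat m :=
  ∑ i, (R i j : ℂ) • F.c i

/-- Standard-form Gaussian state `2^{-m} ∏_{k=1}^m (I + i λ_k c̃_{2k-1} c̃_{2k})`
(ordered product; the factors commute). -/
def gaussStd (F : MajoranaFamily m) (R : Matrix (Fin (2*m)) (Fin (2*m)) ℝ)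
    (lam : Fin m → ℝ) : Mat m :=
  ((2:ℂ)^m)⁻¹ • (List.ofFn (fun k : Fin m =>
    (1 : Mat m) + (Complex.I * (lam k : ℂ)) •
      (tilde F R ⟨2*k.val, by omega⟩ * tilde F R ⟨2*k.val+1, by omega⟩))).prod

/-- A pure Gaussian state: a standard-form Gaussian state with all `λ_k ∈ {-1,1}`,
for some `R ∈ SO(2m,ℝ)`. -/
def IsPureGaussian (F : MajoranaFamily m) (ρ : Mat m) : Prop :=
  ∃ (R : Matrix (Fin (2*m)) (Fin (2*m)) ℝ) (lam : Fin m → ℝ),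
    Rᵀ * R = 1 ∧ R.det = 1 ∧ (∀ k, lam k = 1 ∨ lam k = -1) ∧ ρ = gaussStd F R lam

/-- A convex-Gaussian state: a finite convex combination of pure Gaussian states. -/
def IsConvexGaussian (F : MajoranaFamily m) (ρ : Mat m) : Prop :=
  ∃ (k : ℕ) (p : Fin k → ℝ) (g : Fin k → Mat m),
    (∀ i, 0 ≤ p i) ∧ (∑ i, p i) = 1 ∧ (∀ i, IsPureGaussian F (g i)) ∧
    ρ = ∑ i, p i • g i

/-- `Λ = Σ_j c_j ⊗ c_j` on `ℂ^N ⊗ ℂ^N`. -/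
def Lambda (F : MajoranaFamily m) : Mat2 m := ∑ j, F.c j ⊗ₖ F.c j

/-- Ordered product `c_{a_1} ⋯ c_{a_r}` over a finite set `S = {a_1 < … < a_r}`. -/
def majProd (F : MajoranaFamily m) (S : Finset (Fin (2*m))) : Mat m :=
  ((S.sort (· ≤ ·)).map F.c).prod

/-- An even operator: a complex linear combination of the identity and products of
an even number of distinct Majorana operators. -/
def IsEven (F : MajoranaFamily m) (X : Mat m) : Prop :=
  X ∈ Submodule.span ℂ {Y : Mat m | ∃ S : Finset (Fin (2*m)), Even S.card ∧ Y = majProd F S}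

/-- The Hermitian correlator `i^k c_{a_1} ⋯ c_{a_{2k}}` associated to a set of
cardinality `2k`. -/
def corrOp (F : MajoranaFamily m) (S : Finset (Fin (2*m))) : Mat m :=
  (Complex.I ^ (S.card / 2)) • majProd F S

/-- The operator acting as `A` on the `k`-th tensor factor of `(ℂ^N)^{⊗n}` and as the
identity on the other factors. -/
def embedAt (n : ℕ) (k : Fin n) (A : Mat m) : MatN m n :=
  fun x y => A (x k) (y k) * ∏ l ∈ Finset.univ.erase k, (if x l = y l then 1 else 0)

/-- `Λ^{k,l} = Σ_j c_j^{(k)} c_j^{(l)}` on `(ℂ^N)^{⊗n}`. -/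
def LambdaKL (F : MajoranaFamily m) (n : ℕ) (k l : Fin n) : MatN m n :=
  ∑ j, embedAt n k (F.c j) * embedAt n l (F.c j)

/-- Partial trace of an operator on `(ℂ^N)^{⊗n}` over the tensor factors `2, …, n`. -/
def ptrRest (n : ℕ) (hn : 1 ≤ n) (ρ : MatN m n) : Mat m := fun a b =>
  ∑ g : Fin (n-1) → Fin (2^m),
    ρ (fun i => if h : i.val = 0 then a else g ⟨i.val - 1, by omega⟩)
      (fun i => if h : i.val = 0 then b else g ⟨i.val - 1, by omega⟩)

/-- `ρ` has an `n`-Gaussian-symmetric extension. -/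
def HasGSExt (F : MajoranaFamily m) (n : ℕ) (hn : 1 ≤ n) (ρ : Mat m) : Prop :=
  ∃ ext : MatN m n, IsState ext ∧ ptrRest n hn ext = ρ ∧
    ∀ k l : Fin n, k ≠ l → LambdaKL F n k l * ext = 0

/-- `‖Λ‖₁ = 2(m+1) C(2m, m+1)`. -/
def lambdaNorm (m : ℕ) : ℝ := 2*(m+1) * (Nat.choose (2*m) (m+1) : ℝ)

/-- `ε(n) = min {2, 10 ‖Λ‖₁² 2^{2m} n^{-1/3}}`. -/
def epsB (m n : ℕ) : ℝ :=
  min 2 (10 * lambdaNorm m ^ 2 * 2^(2*m) / (n:ℝ) ^ ((1:ℝ)/3))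

/-- `χ(n) = (ε(n)/2) (2m)!/m!`. -/
def chiB (m n : ℕ) : ℝ :=
  epsB m n / 2 * ((Nat.factorial (2*m) : ℝ) / (Nat.factorial m : ℝ))

/-- `δ(n) = χ(n)/(1+χ(n))`. -/
def deltaB (m n : ℕ) : ℝ := chiB m n / (1 + chiB m n)

/-- The parity operator `P = i^m c_1 ⋯ c_{2m}`. -/
def parityOp (F : MajoranaFamily m) : Mat m :=
  (Complex.I ^ m) • (((List.finRange (2*m)).map F.c).prod)

/-- The operator `I^{⊗ r} ⊗ c_s ⊗ P^{⊗(n-r-1)}` on `(ℂ^N)^{⊗n}` (0-based position `r`). -/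
def dOp (F : MajoranaFamily m) (n : ℕ) (r : Fin n) (s : Fin (2*m)) : MatN m n :=
  fun x y => ∏ l : Fin n,
    if l < r then (if x l = y l then 1 else 0)
    else if l = r then F.c s (x l) (y l)
    else parityOp F (x l) (y l)

/-- The family `d_1, …, d_{2mn}`, where `d_{2m(r-1)+s} = I^{⊗(r-1)} ⊗ c_s ⊗ P^{⊗(n-r)}`. -/
def dAll (hm : 1 ≤ m) (F : MajoranaFamily m) (n : ℕ) (j : Fin (2*(m*n))) : MatN m n :=
  dOp F n
    ⟨j.val / (2*m), by
      have h1 := j.isLt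
      rw [Nat.div_lt_iff_lt_mul (by omega)]
      have h2 : n * (2*m) = 2*(m*n) := by ring
      omega⟩
    ⟨j.val % (2*m), Nat.mod_lt _ (by omega)⟩

/-- The index `2m(k-1)+j` (0-based: `2mk + j`) into a family of `2mn` Majorana operators. -/
def bigIdx (m n : ℕ) (k : Fin n) (j : Fin (2*m)) : Fin (2*(m*n)) :=
  ⟨2*m*k.val + j.val, by
    have hk : k.val + 1 ≤ n := k.isLt
    have hj := j.isLt
    have h1 : 2*m*(k.val+1) = 2*m*k.val + 2*m := by ring
    have h2 : 2*m*(k.val+1) ≤ 2*m*n := Nat.mul_le_mul le_rfl hk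
    have h3 : 2*m*n = 2*(m*n) := by ring
    omega⟩

/-- `Γ^{k,l} = Σ_{j=1}^{2m} (-1)^{m-j} e_{2m(k-1)+j} · e_{2m(l-1)+1} ⋯ ê_{2m(l-1)+j} ⋯ e_{2ml}`. -/
def GammaKL (m n : ℕ) (E : MajoranaFamily (m*n)) (k l : Fin n) :
    Matrix (Fin (2^(m*n))) (Fin (2^(m*n))) ℂ :=
  ∑ j : Fin (2*m), ((-1:ℂ) ^ ((m:ℤ) - (j.val+1 : ℤ))) •
    (E.c (bigIdx m n k j) *
      (((List.finRange (2*m)).filter (fun i => i ≠ j)).map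
        (fun i => E.c (bigIdx m n l i))).prod)

/-- `C = i^{mn} e_1 ⋯ e_{2mn}`. -/
def bigParity (m n : ℕ) (E : MajoranaFamily (m*n)) :
    Matrix (Fin (2^(m*n))) (Fin (2^(m*n))) ℂ :=
  (Complex.I ^ (m*n)) • (((List.finRange (2*(m*n))).map E.c).prod)

/-- The `n`-fold tensor power `A^{⊗n}` of a matrix on `ℂ^N`. -/
def tpow (n : ℕ) (A : Mat m) : MatN m n := fun x y => ∏ k, A (x k) (y k)

/-!
With the parity operator `P = i^m c_1 ⋯ c_{2m}` (an involution anticommuting with every `c_j`)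
one has `Λ = (∑ j, M_j) (-i P ⊗ 1)` where `M_j = i (c_j P) ⊗ c_j`, so `ker Λ ≅ ker ∑ j, M_j`.
The `M_j` are `2m` commuting involutions, so `ℂ^N ⊗ ℂ^N` splits into their joint eigenspaces,
indexed by the sign patterns `U ⊆ {1, …, 2m}` (`M_j = +1` exactly for `j ∈ U`), and `∑ j, M_j`
acts on the one of pattern `U` as `2|U| - 2m`. Conjugation by `c_a ⊗ 1` flips the sign of `M_a`
and fixes the other `M_j`, so all `2^{2m}` joint eigenspaces have the same dimension
`N² / 2^{2m} = 1`; the kernel is the sum of the `C(2m, m)` of them with `|U| = m`.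
-/

open Module LinearMap

section JointProjector

variable {ι R S : Type*} [CommRing R] [Algebra ℂ R] [CommRing S] [Algebra ℂ S]

def halfProj (x : R) : R := (2⁻¹ : ℂ) • (1 + x)

section halfProj

variable {x : R}

private lemma halfProj_eq : halfProj x = algebraMap ℂ R 2⁻¹ * (1 + x) := Algebra.smul_def _ _

private lemma algebraMap_two_inv_mul : algebraMap ℂ R 2⁻¹ * 2 = 1 := by
  rw [← map_ofNat (algebraMap ℂ R) 2, ← map_mul]; norm_num

lemma mul_halfProj (hx : x * x = 1) : x * halfProj x = halfProj x := by
  rw [halfProj_eq]; linear_combination algebraMap ℂ R 2⁻¹ * hx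

lemma halfProj_mul_self (hx : x * x = 1) : halfProj x * halfProj x = halfProj x := by
  rw [halfProj_eq]
  linear_combination algebraMap ℂ R 2⁻¹ ^ 2 * hx
    + (algebraMap ℂ R 2⁻¹ * (1 + x)) * (algebraMap_two_inv_mul (R := R))

lemma halfProj_mul_halfProj_neg (hx : x * x = 1) : halfProj x * halfProj (-x) = 0 := by
  rw [halfProj_eq, halfProj_eq]; linear_combination -algebraMap ℂ R 2⁻¹ ^ 2 * hx

lemma halfProj_add_halfProj_neg (x : R) : halfProj x + halfProj (-x) = 1 := by
  rw [halfProj, halfProj, ← smul_add]; module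

lemma map_halfProj (f : R →ₐ[ℂ] S) (x : R) : f (halfProj x) = halfProj (f x) := by
  simp [halfProj]

end halfProj

variable [DecidableEq ι] {M : ι → R}

def signOf (U : Finset ι) (j : ι) : ℂ := if j ∈ U then 1 else -1

lemma signOf_mul_self (U : Finset ι) (j : ι) : signOf U j * signOf U j = 1 := by
  unfold signOf; split_ifs <;> norm_num

lemma exists_signOf_eq_neg_of_ne {U V : Finset ι} (hUV : U ≠ V) :
    ∃ j, signOf V j = -signOf U j := by
  obtain ⟨j, hj⟩ : ∃ j, ¬(j ∈ U ↔ j ∈ V) := by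
    by_contra! h
    exact hUV (ext h)
  refine ⟨j, ?_⟩
  by_cases hU : j ∈ U <;> simp_all [signOf]

lemma signOf_smul_mul_self (hM : ∀ j, M j * M j = 1) (U : Finset ι) (j : ι) :
    signOf U j • M j * signOf U j • M j = 1 := by
  rw [smul_mul_smul_comm, signOf_mul_self, hM, one_smul]

variable [Fintype ι]

def jointProj (M : ι → R) (U : Finset ι) : R := ∏ j, halfProj (signOf U j • M j)

lemma sum_signOf (U : Finset ι) : ∑ j, signOf U j = 2 * #U - Fintype.card ι := by
  simp [signOf, sum_ite, filter_not, card_sdiff]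
  rw [Nat.cast_sub (card_le_univ U)]; ring

lemma jointProj_eq_prod_mul_prod (M : ι → R) (U : Finset ι) :
    jointProj M U = (∏ j ∈ U, halfProj (M j)) * ∏ j ∈ univ \ U, halfProj (-M j) := by
  simp only [jointProj, signOf, ite_smul, one_smul, neg_one_smul, apply_ite halfProj, prod_ite,
    filter_mem_eq_inter, univ_inter, filter_not]

lemma sum_jointProj (M : ι → R) : ∑ U, jointProj M U = 1 := by
  calc ∑ U, jointProj M U
      = ∏ j, (halfProj (M j) + halfProj (-M j)) := by
        rw [prod_add, powerset_univ]
        exact sum_congr rfl fun U _ => jointProj_eq_prod_mul_prod M U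
    _ = 1 := by simp only [halfProj_add_halfProj_neg, prod_const_one]

lemma jointProj_mul_self (hM : ∀ j, M j * M j = 1) (U : Finset ι) :
    jointProj M U * jointProj M U = jointProj M U := by
  rw [jointProj, ← prod_mul_distrib]
  exact prod_congr rfl fun j _ => halfProj_mul_self (signOf_smul_mul_self hM U j)

lemma jointProj_mul_jointProj_of_ne (hM : ∀ j, M j * M j = 1) {U V : Finset ι} (hUV : U ≠ V) :
    jointProj M U * jointProj M V = 0 := by
  obtain ⟨j, hj⟩ := exists_signOf_eq_neg_of_ne hUV
  rw [jointProj, jointProj, ← prod_mul_distrib]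
  refine prod_eq_zero (mem_univ j) ?_
  rw [hj, neg_smul, halfProj_mul_halfProj_neg (signOf_smul_mul_self hM U j)]

lemma mul_jointProj (hM : ∀ j, M j * M j = 1) (U : Finset ι) (j : ι) :
    M j * jointProj M U = signOf U j • jointProj M U := by
  have hfactor : M j * halfProj (signOf U j • M j) = signOf U j • halfProj (signOf U j • M j) := by
    conv_rhs => rw [← mul_halfProj (signOf_smul_mul_self hM U j), smul_mul_assoc, smul_smul,
      signOf_mul_self, one_smul]
  rw [jointProj, ← mul_prod_erase _ _ (mem_univ j), ← mul_assoc, hfactor, smul_mul_assoc]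

lemma sum_mul_jointProj (hM : ∀ j, M j * M j = 1) (U : Finset ι) :
    (∑ j, M j) * jointProj M U = (2 * #U - Fintype.card ι : ℂ) • jointProj M U := by
  rw [sum_mul, ← sum_signOf, sum_smul]
  exact sum_congr rfl fun j _ => mul_jointProj hM U j

lemma map_jointProj (f : R →ₐ[ℂ] S) (M : ι → R) (U : Finset ι) :
    f (jointProj M U) = jointProj (f ∘ M) U := by
  simp [jointProj, map_prod, map_halfProj]

lemma jointProj_congr {N : ι → R} {U V : Finset ι} (h : ∀ j, signOf U j • M j = signOf V j • N j) :
    jointProj M U = jointProj N V := by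
  simp only [jointProj, h]

end JointProjector

section MatrixKernel

variable {K n : Type*} [Field K] [Fintype n] [DecidableEq n]

lemma Matrix.finrank_range_mulVecLin_of_mul_self {Q : Matrix n n K} (hQ : Q * Q = Q) :
    (finrank K (range Q.mulVecLin) : K) = Q.trace := by
  have hproj : IsProj (range Q.mulVecLin) Q.mulVecLin :=
    IsIdempotentElem.isProj_range _ <| by
      rw [IsIdempotentElem, Module.End.mul_eq_comp, ← mulVecLin_mul, hQ]
  rw [← hproj.trace, ← Matrix.toLin'_apply', Matrix.trace_toLin'_eq]

lemma Matrix.ker_mulVecLin_eq_range {B Q C : Matrix n n K} (hBQ : B * Q = 0)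
    (hQCB : Q + C * B = 1) :
    ker B.mulVecLin = range Q.mulVecLin := by
  ext v
  simp only [mem_ker, LinearMap.mem_range, mulVecLin_apply]
  constructor
  · intro hv
    refine ⟨v, ?_⟩
    calc Q *ᵥ v = (Q + C * B) *ᵥ v := by
          rw [add_mulVec, ← mulVec_mulVec, hv, mulVec_zero, add_zero]
      _ = v := by rw [hQCB, one_mulVec]
  · rintro ⟨w, rfl⟩
    rw [mulVec_mulVec, hBQ, zero_mulVec]

lemma Matrix.finrank_ker_mulVecLin_mul_of_isUnit {B W : Matrix n n K} (hW : IsUnit W) :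
    finrank K (ker (B * W).mulVecLin) = finrank K (ker B.mulVecLin) := by
  let e := W.toLinearEquiv' hW.invertible
  rw [mulVecLin_mul, ker_comp, show W.mulVecLin = e from rfl, Submodule.comap_equiv_eq_map_symm,
    LinearEquiv.finrank_map_eq]

theorem Matrix.finrank_ker_eq_sum_trace {κ : Type*} [Fintype κ] [DecidableEq κ]
    {B : Matrix n n K} {e : κ → Matrix n n K} {μ : κ → K} [DecidablePred fun i => μ i = 0]
    (hsum : ∑ i, e i = 1)
    (hmul : ∀ i j, e i * e j = if i = j then e i else 0)
    (hBe : ∀ i, B * e i = μ i • e i) (heB : ∀ i, e i * B = μ i • e i) :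
    (finrank K (ker B.mulVecLin) : K) = ∑ i with μ i = 0, (e i).trace := by
  set Q := ∑ i with μ i = 0, e i
  have hQQ : Q * Q = Q := by
    simp only [Q, sum_mul_sum, hmul, sum_ite_eq]
    exact sum_congr rfl fun i hi => if_pos hi
  have hBQ : B * Q = 0 := by
    rw [mul_sum]
    exact sum_eq_zero fun i hi => by rw [hBe, (mem_filter.1 hi).2, zero_smul]
  have hQCB : Q + (∑ i with μ i ≠ 0, (μ i)⁻¹ • e i) * B = 1 := by
    rw [sum_mul, ← hsum, ← sum_filter_add_sum_filter_not univ (fun i => μ i = 0)]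
    congr 1
    refine sum_congr rfl fun i hi => ?_
    rw [smul_mul_assoc, heB, smul_smul, inv_mul_cancel₀ (mem_filter.1 hi).2, one_smul]
  rw [ker_mulVecLin_eq_range hBQ hQCB, finrank_range_mulVecLin_of_mul_self hQQ, trace_sum]

end MatrixKernel

section CommutingInvolutions

variable {ι n R : Type*} [Fintype ι] [DecidableEq ι] [Fintype n] [DecidableEq n]
  [CommRing R] [Algebra ℂ R] (ρ : R →ₐ[ℂ] Matrix n n ℂ) {M : ι → R}

theorem finrank_ker_map_sum_eq_sum_trace (hM : ∀ j, M j * M j = 1) :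
    (finrank ℂ (ker (ρ (∑ j, M j)).mulVecLin) : ℂ) =
      ∑ U with 2 * #U = Fintype.card ι, (ρ (jointProj M U)).trace := by
  have hμ : ∀ U : Finset ι, (2 * #U - Fintype.card ι : ℂ) = 0 ↔ 2 * #U = Fintype.card ι := by
    intro U; rw [sub_eq_zero]; exact_mod_cast Iff.rfl
  simp_rw [← hμ]
  refine Matrix.finrank_ker_eq_sum_trace
    (μ := fun U : Finset ι => (2 * #U - Fintype.card ι : ℂ)) ?_ ?_ ?_ ?_
  · rw [← map_sum, sum_jointProj, map_one]
  · intro U V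
    split_ifs with h
    · rw [h, ← map_mul, jointProj_mul_self hM]
    · rw [← map_mul, jointProj_mul_jointProj_of_ne hM h, map_zero]
  · intro U
    rw [← map_mul, sum_mul_jointProj hM, map_smul]
  · intro U
    rw [← map_mul, mul_comm, sum_mul_jointProj hM, map_smul]

theorem trace_map_jointProj_eq (ψ : ι → R →ₐ[ℂ] R)
    (hψ : ∀ a j, ψ a (M j) = if j = a then -M j else M j)
    (hρψ : ∀ a x, (ρ (ψ a x)).trace = (ρ x).trace) (U : Finset ι) :
    (ρ (jointProj M U)).trace = (ρ (jointProj M ∅)).trace := by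
  induction U using Finset.induction_on with
  | empty => rfl
  | insert a U ha ih =>
    rw [← ih, ← hρψ a, map_jointProj]
    congr 2
    refine jointProj_congr fun j => ?_
    rcases eq_or_ne j a with rfl | hj <;> simp [signOf, *]

theorem trace_map_jointProj_mul_two_pow (ψ : ι → R →ₐ[ℂ] R)
    (hψ : ∀ a j, ψ a (M j) = if j = a then -M j else M j)
    (hρψ : ∀ a x, (ρ (ψ a x)).trace = (ρ x).trace) (U : Finset ι) :
    (ρ (jointProj M U)).trace * 2 ^ Fintype.card ι = Fintype.card n := by
  have h := congrArg (fun x => (ρ x).trace) (sum_jointProj M)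
  simp only [map_sum, trace_sum, trace_map_jointProj_eq ρ ψ hψ hρψ, sum_const, card_univ,
    Fintype.card_finset, map_one, nsmul_eq_mul] at h
  rw [trace_map_jointProj_eq ρ ψ hψ hρψ, ← Matrix.trace_one, ← h]; push_cast; ring

end CommutingInvolutions

section MatrixInvolutions

variable {ι n : Type*} [Fintype ι] [DecidableEq ι] [Fintype n] [DecidableEq n]

def Matrix.conjInvolution (V : Matrix n n ℂ) (hV : V * V = 1) :
    Matrix n n ℂ →ₐ[ℂ] Matrix n n ℂ :=
  MulSemiringAction.toAlgHom ℂ _ (ConjAct.toConjAct (⟨V, V, hV, hV⟩ : (Matrix n n ℂ)ˣ))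

lemma Matrix.conjInvolution_apply {V : Matrix n n ℂ} (hV : V * V = 1) (X : Matrix n n ℂ) :
    conjInvolution V hV X = V * X * V := rfl

open scoped IsMulCommutative in
theorem Matrix.finrank_ker_sum_mul_two_pow {M V : ι → Matrix n n ℂ}
    (hcomm : ∀ i j, Commute (M i) (M j)) (hM : ∀ j, M j * M j = 1) (hV : ∀ a, V a * V a = 1)
    (hVM : ∀ a j, V a * M j * V a = if j = a then -M j else M j) :
    finrank ℂ (ker (∑ j, M j).mulVecLin) * 2 ^ Fintype.card ι =
      #{U : Finset ι | 2 * #U = Fintype.card ι} * Fintype.card n := by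
  -- `jointProj` needs a commutative ring: work in the algebra generated by the `M j`.
  let A := Algebra.adjoin ℂ (Set.range M)
  have : IsMulCommutative A :=
    Algebra.isMulCommutative_adjoin ℂ (by rintro _ ⟨i, rfl⟩ _ ⟨j, rfl⟩; exact hcomm i j)
  let M' (j : ι) : A := ⟨M j, Algebra.subset_adjoin ⟨j, rfl⟩⟩
  have hA : ∀ a, A ≤ A.comap (conjInvolution (V a) (hV a)) := fun a =>
    Algebra.adjoin_le <| Set.range_subset_iff.2 fun j => by
      rw [SetLike.mem_coe, Subalgebra.mem_comap, conjInvolution_apply, hVM]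
      split_ifs
      exacts [neg_mem (M' j).2, (M' j).2]
  let ψ (a : ι) : A →ₐ[ℂ] A :=
    ((conjInvolution (V a) (hV a)).comp A.val).codRestrict A fun x => hA a x.2
  have hψ : ∀ a j, ψ a (M' j) = if j = a then -M' j else M' j := by
    intro a j
    apply Subtype.ext
    change V a * M j * V a = _
    rw [hVM]
    split_ifs <;> rfl
  have hρψ : ∀ a x, (A.val (ψ a x)).trace = (A.val x).trace := fun a x => by
    show (V a * x * V a).trace = _
    rw [trace_mul_cycle, hV, one_mul]
    rfl
  have hM' : ∀ j, M' j * M' j = 1 := fun j => Subtype.ext (hM j)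
  have hsum : ∑ j, M j = A.val (∑ j, M' j) := by simp [M']
  have hfinrank : (finrank ℂ (ker (∑ j, M j).mulVecLin) : ℂ) * 2 ^ Fintype.card ι =
      #{U : Finset ι | 2 * #U = Fintype.card ι} * Fintype.card n := by
    rw [hsum, finrank_ker_map_sum_eq_sum_trace A.val hM', sum_mul,
      sum_congr rfl fun U _ => trace_map_jointProj_mul_two_pow A.val ψ hψ hρψ U, sum_const,
      nsmul_eq_mul]
  exact_mod_cast hfinrank

end MatrixInvolutions

lemma Nat.self_add_choose_two_mul_two (m : ℕ) : m + (2 * m).choose 2 = 2 * (m * m) := by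
  induction m with
  | zero => rfl
  | succ k ih =>
    rw [show 2 * (k + 1) = 2 * k + 1 + 1 by ring, Nat.choose_succ_succ',
      Nat.choose_succ_succ' (2 * k) 1, Nat.choose_one_right, Nat.choose_one_right]
    nlinarith

namespace MajoranaFamily

variable (F : MajoranaFamily m)

lemma c_mul_prod (a : Fin (2*m)) (L : List (Fin (2*m))) :
    F.c a * (L.map F.c).prod =
      (-1 : ℂ) ^ (L.length + L.count a) • ((L.map F.c).prod * F.c a) := by
  induction L with
  | nil => simp
  | cons b t ih =>
    simp only [List.map_cons, List.prod_cons, List.length_cons, List.count_cons, beq_iff_eq]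
    rcases eq_or_ne b a with rfl | hba
    · rw [if_pos rfl, show t.length + 1 + (t.count b + 1) = t.length + t.count b + 2 by ring,
        pow_add, neg_one_sq, mul_one, mul_assoc, ← mul_smul_comm, ← ih]
    · rw [if_neg hba, add_zero, ← mul_assoc, F.anticomm a b hba.symm, neg_mul, mul_assoc, ih,
        mul_smul_comm, ← mul_assoc, add_right_comm, pow_succ, mul_neg_one, neg_smul]

lemma prod_mul_prod_of_nodup {L : List (Fin (2*m))} (hL : L.Nodup) :
    (L.map F.c).prod * (L.map F.c).prod = (-1 : ℂ) ^ L.length.choose 2 • 1 := by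
  induction L with
  | nil => simp
  | cons b t ih =>
    rw [List.nodup_cons] at hL
    have hb := F.c_mul_prod b t
    rw [List.count_eq_zero_of_not_mem hL.1, add_zero] at hb
    simp only [List.map_cons, List.prod_cons, List.length_cons]
    nth_rw 1 [hb]
    rw [smul_mul_assoc, mul_assoc, ← mul_assoc (F.c b), F.sq, one_mul, ih hL.2, smul_smul,
      ← pow_add, Nat.choose_succ_succ', Nat.choose_one_right]

lemma c_mul_parityOp (a : Fin (2*m)) : F.c a * parityOp F = -(parityOp F * F.c a) := by
  rw [parityOp, mul_smul_comm, c_mul_prod, List.length_finRange, List.count_finRange, pow_succ,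
    pow_mul, neg_one_sq, one_pow, one_mul, neg_one_smul, smul_mul_assoc, smul_neg]

lemma parityOp_mul_c (a : Fin (2*m)) : parityOp F * F.c a = -(F.c a * parityOp F) := by
  rw [c_mul_parityOp, neg_neg]

lemma parityOp_mul_self : parityOp F * parityOp F = 1 := by
  rw [parityOp, smul_mul_smul_comm, prod_mul_prod_of_nodup F (List.nodup_finRange _),
    List.length_finRange, smul_smul, ← pow_add, ← two_mul, pow_mul, Complex.I_sq, ← pow_add,
    Nat.self_add_choose_two_mul_two, pow_mul, neg_one_sq, one_pow, one_smul]

def pairOp (j : Fin (2*m)) : Mat2 m := Complex.I • ((F.c j * parityOp F) ⊗ₖ F.c j)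

def flipOp (a : Fin (2*m)) : Mat2 m := F.c a ⊗ₖ (1 : Mat m)

lemma pairOp_mul_pairOp (j k : Fin (2*m)) :
    F.pairOp j * F.pairOp k = (F.c j * F.c k) ⊗ₖ (F.c j * F.c k) := by
  have h : F.c j * parityOp F * (F.c k * parityOp F) = (-1 : ℂ) • (F.c j * F.c k) := by
    rw [mul_assoc, ← mul_assoc (parityOp F), parityOp_mul_c, neg_mul, mul_neg, mul_assoc,
      parityOp_mul_self, mul_one, neg_one_smul]
  rw [pairOp, pairOp, smul_mul_smul_comm, ← mul_kronecker_mul, h, smul_kronecker, smul_smul,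
    Complex.I_mul_I, neg_one_mul, neg_neg, one_smul]

lemma pairOp_mul_self (j : Fin (2*m)) : F.pairOp j * F.pairOp j = 1 := by
  rw [pairOp_mul_pairOp, F.sq, one_kronecker_one]

lemma commute_pairOp (j k : Fin (2*m)) : Commute (F.pairOp j) (F.pairOp k) := by
  rcases eq_or_ne j k with rfl | hjk
  · exact Commute.refl _
  rw [Commute, SemiconjBy, pairOp_mul_pairOp, pairOp_mul_pairOp, F.anticomm k j hjk.symm,
    ← neg_one_smul ℂ (F.c j * F.c k), smul_kronecker, kronecker_smul, smul_smul, neg_one_mul,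
    neg_neg, one_smul]

lemma flipOp_mul_self (a : Fin (2*m)) : F.flipOp a * F.flipOp a = 1 := by
  rw [flipOp, ← mul_kronecker_mul, F.sq, one_mul, one_kronecker_one]

lemma c_mul_c_mul_c (a j : Fin (2*m)) :
    F.c a * F.c j * F.c a = if j = a then F.c j else -F.c j := by
  split_ifs with h
  · rw [h, F.sq, one_mul]
  · rw [F.anticomm a j (Ne.symm h), neg_mul, mul_assoc, F.sq, mul_one]

lemma flipOp_mul_pairOp_mul_flipOp (a j : Fin (2*m)) :
    F.flipOp a * F.pairOp j * F.flipOp a = if j = a then -F.pairOp j else F.pairOp j := by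
  have h : F.c a * (F.c j * parityOp F) * F.c a = -((F.c a * F.c j * F.c a) * parityOp F) := by
    rw [mul_assoc, mul_assoc, parityOp_mul_c, mul_neg, mul_neg, ← mul_assoc, ← mul_assoc]
  rw [flipOp, pairOp, mul_smul_comm, smul_mul_assoc, ← mul_kronecker_mul, ← mul_kronecker_mul,
    one_mul, mul_one, h, c_mul_c_mul_c]
  split_ifs
  · rw [← neg_one_smul ℂ (F.c j * parityOp F), smul_kronecker, smul_comm, neg_one_smul]
  · rw [neg_mul, neg_neg]

lemma Lambda_eq_sum_pairOp_mul :
    Lambda F = (∑ j, F.pairOp j) * ((-Complex.I) • (parityOp F ⊗ₖ (1 : Mat m))) := by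
  rw [Lambda, sum_mul]
  refine sum_congr rfl fun j _ => ?_
  rw [pairOp, smul_mul_smul_comm, ← mul_kronecker_mul, mul_assoc, parityOp_mul_self, mul_one,
    mul_neg, Complex.I_mul_I, neg_neg, one_smul]

lemma finrank_ker_Lambda :
    finrank ℂ (ker (Lambda F).mulVecLin) = finrank ℂ (ker (∑ j, F.pairOp j).mulVecLin) := by
  have hW : IsUnit ((-Complex.I) • (parityOp F ⊗ₖ (1 : Mat m))) := by
    refine IsUnit.of_mul_eq_one (Complex.I • (parityOp F ⊗ₖ (1 : Mat m))) ?_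
    rw [smul_mul_smul_comm, ← mul_kronecker_mul, F.parityOp_mul_self, one_mul, one_kronecker_one,
      neg_mul, Complex.I_mul_I, neg_neg, one_smul]
  rw [F.Lambda_eq_sum_pairOp_mul, Matrix.finrank_ker_mulVecLin_mul_of_isUnit hW]

end MajoranaFamily

lemma card_filter_two_mul_card_eq (m : ℕ) :
    #{U : Finset (Fin (2*m)) | 2 * #U = 2 * m} = (2*m).choose m := by
  have : ({U | 2 * #U = 2 * m} : Finset (Finset (Fin (2*m)))) = powersetCard m univ := by
    ext U
    simp only [mem_filter, mem_univ, true_and, mem_powersetCard, subset_univ]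
    omega
  rw [this, card_powersetCard, card_univ, Fintype.card_fin]

theorem stmt_9_general (m : ℕ) (F : MajoranaFamily m) :
    Module.finrank ℂ (LinearMap.ker (Lambda F).mulVecLin) = Nat.choose (2*m) m := by
  have h := Matrix.finrank_ker_sum_mul_two_pow F.commute_pairOp F.pairOp_mul_self
    F.flipOp_mul_self F.flipOp_mul_pairOp_mul_flipOp
  rw [Fintype.card_fin, card_filter_two_mul_card_eq, Fintype.card_prod, Fintype.card_fin,
    ← pow_add, ← two_mul] at h
  rw [F.finrank_ker_Lambda]
  exact Nat.eq_of_mul_eq_mul_right (by positivity) h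

/-- The null space of `Λ` has dimension `C(2m, m)`. -/
theorem stmt_9 (m : ℕ) (hm : 1 ≤ m) (F : MajoranaFamily m) :
    Module.finrank ℂ (LinearMap.ker (Lambda F).mulVecLin) = Nat.choose (2*m) m :=
  stmt_9_general m F
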